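/- arXiv:2407.15737 — 5 statements merged into one kernel-verified Lean document; each statement's English description precedes it below -/
import Mathlib

section
/- Assume max_{j∈J} p_j > 0 (so C > 0). If β* is a partition of J into M (possibly empty) bags that minimizes the expected makespan ∑_{m=1}^M q_m · Opt_max(β, m) over all such partitions, then every bag B of β* has size p(B) ≤ 4C; in other words, no optimal solution uses a bag of size greater than 4C. -/
open scoped BigOperators

attribute [local instance] Classical.propDecidable

/-- The load of machine `i` under the assignment `σ` of items (with sizes `sz`) to `m` machines. -/
noncomputable def load {ι : Type*} [Fintype ι] {m : ℕ} (sz : ι → ℝ) (σ : ι → Fin m)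
    (i : Fin m) : ℝ :=
  ∑ b : ι, if σ b = i then sz b else 0

/-- The optimal makespan (minimum over all assignments of the maximum machine load)
for items with sizes `sz` on `m` identical machines. -/
noncomputable def optMax {ι : Type*} [Fintype ι] (sz : ι → ℝ) (m : ℕ) : ℝ :=
  ⨅ σ : ι → Fin m, ⨆ i : Fin m, load sz σ i

/-- The size of bag `b` for the partition `β` of the jobs into bags. -/
noncomputable def bagSize {n : ℕ} {ι : Type*} (p : Fin n → ℝ) (β : Fin n → ι) (b : ι) : ℝ :=
  ∑ j : Fin n, if β j = b then p j else 0

/-- The quantity `C = ∑_{m=1}^M q_m · max (max_j p_j) ((∑_j p_j)/m)`,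
where scenario `i : Fin M` corresponds to `m = i+1` machines. -/
noncomputable def Cval {n M : ℕ} (p : Fin n → ℝ) (q : Fin M → ℝ) : ℝ :=
  ∑ i : Fin M, q i * max (⨆ j : Fin n, p j) ((∑ j : Fin n, p j) / ((i.1 + 1 : ℕ) : ℝ))

/-!
A single bag is a single item, so on any number of machines the optimal makespan is at least
the size of each bag; averaging over the scenarios, every bag of `β*` is at most the expected
makespan of `β*`, hence at most that of any other partition. Compare with the partition obtained
by list scheduling the jobs into the `M` bags: its bags have size at most `P / M + pmax`
(`P = ∑ p_j`), so list scheduling these bags on `m ≤ M` machines gives makespan at most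
`P / m + P / M + pmax ≤ 3 · max pmax (P / m)`. Taking expectations gives the bound `3C ≤ 4C`.
-/

open Finset

section Scheduling

variable {ι : Type*} {m : ℕ} {sz : ι → ℝ}

lemma exists_sum_filter_le_div (hm : 0 < m) (s : Finset ι) (σ : ι → Fin m) :
    ∃ i, ∑ b ∈ s with σ b = i, sz b ≤ (∑ b ∈ s, sz b) / m := by
  have hm' : (m : ℝ) ≠ 0 := by positivity
  have : Nonempty (Fin m) := ⟨⟨0, hm⟩⟩
  obtain ⟨i, -, hi⟩ := exists_le_of_sum_le (s := univ) univ_nonempty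
    (f := fun i => ∑ b ∈ s with σ b = i, sz b) (g := fun _ => (∑ b ∈ s, sz b) / m)
    (by rw [sum_fiberwise, sum_const, card_univ, Fintype.card_fin, nsmul_eq_mul,
      mul_div_cancel₀ _ hm'])
  exact ⟨i, hi⟩

variable [Fintype ι]

lemma load_eq_sum_filter (sz : ι → ℝ) (σ : ι → Fin m) (i : Fin m) :
    load sz σ i = ∑ b with σ b = i, sz b := by
  rw [load, sum_filter]

lemma load_nonneg (hsz : ∀ b, 0 ≤ sz b) (σ : ι → Fin m) (i : Fin m) : 0 ≤ load sz σ i := by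
  rw [load_eq_sum_filter]
  exact sum_nonneg fun b _ => hsz b

lemma le_load_apply (hsz : ∀ b, 0 ≤ sz b) (σ : ι → Fin m) (b : ι) : sz b ≤ load sz σ (σ b) := by
  rw [load_eq_sum_filter]
  exact single_le_sum (fun c _ => hsz c) (mem_filter.2 ⟨mem_univ b, rfl⟩)

lemma le_optMax (hm : 0 < m) (hsz : ∀ b, 0 ≤ sz b) (b : ι) : sz b ≤ optMax sz m := by
  have : Nonempty (Fin m) := ⟨⟨0, hm⟩⟩
  refine le_ciInf fun σ => (le_load_apply hsz σ b).trans ?_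
  exact le_ciSup (Set.finite_range _).bddAbove (σ b)

lemma optMax_le_of_load_le (hm : 0 < m) (hsz : ∀ b, 0 ≤ sz b) {T : ℝ} (σ : ι → Fin m)
    (h : ∀ i, load sz σ i ≤ T) : optMax sz m ≤ T := by
  have : Nonempty (Fin m) := ⟨⟨0, hm⟩⟩
  have hbdd : BddBelow (Set.range fun τ : ι → Fin m => ⨆ i, load sz τ i) := by
    refine ⟨0, ?_⟩
    rintro x ⟨τ, rfl⟩
    exact (load_nonneg hsz τ ⟨0, hm⟩).trans (le_ciSup (Set.finite_range _).bddAbove _)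
  exact ciInf_le_of_le hbdd σ (ciSup_le h)

/-- List scheduling: put each item on a currently least loaded machine. -/
theorem exists_load_le_sum_div_add (hm : 0 < m) (hsz : ∀ b, 0 ≤ sz b) {T : ℝ} (hT0 : 0 ≤ T)
    (hT : ∀ b, sz b ≤ T) : ∃ σ : ι → Fin m, ∀ i, load sz σ i ≤ (∑ b, sz b) / m + T := by
  suffices ∀ s : Finset ι, ∃ σ : ι → Fin m,
      ∀ i, ∑ b ∈ s with σ b = i, sz b ≤ (∑ b ∈ s, sz b) / m + T by
    simpa only [load_eq_sum_filter] using this univ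
  intro s
  induction s using Finset.induction_on with
  | empty => exact ⟨fun _ => ⟨0, hm⟩, fun i => by simpa using hT0⟩
  | insert a s ha ih =>
    obtain ⟨σ, hσ⟩ := ih
    obtain ⟨i₀, hi₀⟩ := exists_sum_filter_le_div (sz := sz) hm s σ
    refine ⟨Function.update σ a i₀, fun i => ?_⟩
    have hs : ∀ i, ∑ b ∈ s with Function.update σ a i₀ b = i, sz b =
        ∑ b ∈ s with σ b = i, sz b := fun i =>
      sum_congr (filter_congr fun b hb => by
        rw [Function.update_of_ne (ne_of_mem_of_not_mem hb ha)]) fun _ _ => rfl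
    have hdiv : (∑ b ∈ s, sz b) / m ≤ (∑ b ∈ insert a s, sz b) / m := by
      rw [sum_insert ha]
      gcongr
      linarith [hsz a]
    rw [filter_insert, Function.update_self]
    split_ifs with h
    · subst h
      rw [sum_insert (fun ha' => ha (mem_filter.1 ha').1), hs, sum_insert ha, add_div]
      have : 0 ≤ sz a / m := by have := hsz a; positivity
      linarith [hT a]
    · rw [hs]
      linarith [hσ i]

theorem optMax_le_sum_div_add (hm : 0 < m) (hsz : ∀ b, 0 ≤ sz b) {T : ℝ} (hT0 : 0 ≤ T)
    (hT : ∀ b, sz b ≤ T) : optMax sz m ≤ (∑ b, sz b) / m + T :=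
  have ⟨σ, hσ⟩ := exists_load_le_sum_div_add hm hsz hT0 hT
  optMax_le_of_load_le hm hsz σ hσ

end Scheduling

section Bags

variable {n M : ℕ} (p : Fin n → ℝ)

lemma bagSize_eq_load (β : Fin n → Fin M) : bagSize p β = load p β := by
  ext b
  exact sum_congr rfl fun j _ => by congr

lemma bagSize_nonneg (hp : ∀ j, 0 ≤ p j) (β : Fin n → Fin M) (b : Fin M) :
    0 ≤ bagSize p β b := by
  rw [bagSize_eq_load]
  exact load_nonneg hp β b

lemma sum_bagSize (β : Fin n → Fin M) : ∑ b, bagSize p β b = ∑ j, p j := by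
  simp only [bagSize_eq_load, load_eq_sum_filter, sum_fiberwise]

lemma Cval_nonneg (hp : ∀ j, 0 ≤ p j) {q : Fin M → ℝ} (hq : ∀ i, 0 ≤ q i) : 0 ≤ Cval p q :=
  sum_nonneg fun i _ => mul_nonneg (hq i) ((Real.iSup_nonneg hp).trans (le_max_left _ _))

lemma exists_optMax_le_three_mul (hM : 0 < M) (hp : ∀ j, 0 ≤ p j) :
    ∃ β : Fin n → Fin M, ∀ i : Fin M, optMax (bagSize p β) (i.1 + 1) ≤
      3 * max (⨆ j, p j) ((∑ j, p j) / ((i.1 + 1 : ℕ) : ℝ)) := by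
  set pmax := ⨆ j, p j
  set P := ∑ j, p j
  have hpmax : 0 ≤ pmax := Real.iSup_nonneg hp
  have hP : 0 ≤ P := sum_nonneg fun j _ => hp j
  obtain ⟨β, hβ⟩ := exists_load_le_sum_div_add hM hp hpmax
    fun j => le_ciSup (Set.finite_range p).bddAbove j
  refine ⟨β, fun i => ?_⟩
  have hopt := optMax_le_sum_div_add (m := i.1 + 1) i.1.succ_pos (bagSize_nonneg p hp β)
    (T := P / M + pmax) (by positivity) (by simpa only [bagSize_eq_load] using hβ)
  rw [sum_bagSize] at hopt
  have hPM : P / M ≤ P / ((i.1 + 1 : ℕ) : ℝ) :=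
    div_le_div_of_nonneg_left hP (by positivity) (by exact_mod_cast i.2)
  linarith [le_max_left pmax (P / ((i.1 + 1 : ℕ) : ℝ)),
    le_max_right pmax (P / ((i.1 + 1 : ℕ) : ℝ))]

end Bags

theorem stmt1_general (n M : ℕ)
    (p : Fin n → ℝ) (hp : ∀ j, 0 ≤ p j)
    (q : Fin M → ℝ) (hq : ∀ i, 0 ≤ q i) (hq1 : ∑ i, q i = 1)
    (βopt : Fin n → Fin M)
    (hopt : ∀ β : Fin n → Fin M,
      ∑ i : Fin M, q i * optMax (bagSize p βopt) (i.1 + 1) ≤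
        ∑ i : Fin M, q i * optMax (bagSize p β) (i.1 + 1)) :
    ∀ b : Fin M, bagSize p βopt b ≤ 4 * Cval p q := by
  intro b
  obtain ⟨β, hβ⟩ := exists_optMax_le_three_mul p (Fin.pos b) hp
  calc bagSize p βopt b
      = ∑ i : Fin M, q i * bagSize p βopt b := by rw [← sum_mul, hq1, one_mul]
    _ ≤ ∑ i : Fin M, q i * optMax (bagSize p βopt) (i.1 + 1) :=
        sum_le_sum fun i _ => mul_le_mul_of_nonneg_left
          (le_optMax i.1.succ_pos (bagSize_nonneg p hp βopt) b) (hq i)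
    _ ≤ ∑ i : Fin M, q i * optMax (bagSize p β) (i.1 + 1) := hopt β
    _ ≤ ∑ i : Fin M, q i * (3 * max (⨆ j, p j) ((∑ j, p j) / ((i.1 + 1 : ℕ) : ℝ))) :=
        sum_le_sum fun i _ => mul_le_mul_of_nonneg_left (hβ i) (hq i)
    _ = 3 * Cval p q := by
        rw [Cval, mul_sum]
        exact sum_congr rfl fun i _ => by ring
    _ ≤ 4 * Cval p q := by linarith [Cval_nonneg p hp hq]

/-- if `β*` minimizes the expected makespan over all partitions of the
jobs into `M` bags, then every bag of `β*` has size at most `4C`. -/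
theorem stmt1 (n M : ℕ) (hM : 1 ≤ M)
    (p : Fin n → ℝ) (hp : ∀ j, 0 ≤ p j) (hpmax : 0 < ⨆ j : Fin n, p j)
    (q : Fin M → ℝ) (hq : ∀ i, 0 ≤ q i) (hq1 : ∑ i, q i = 1)
    (βopt : Fin n → Fin M)
    (hopt : ∀ β : Fin n → Fin M,
      ∑ i : Fin M, q i * optMax (bagSize p βopt) (i.1 + 1) ≤
        ∑ i : Fin M, q i * optMax (bagSize p β) (i.1 + 1)) :
    ∀ b : Fin M, bagSize p βopt b ≤ 4 * Cval p q :=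
  stmt1_general n M p hp q hq hq1 βopt hopt
end

section
/- Let ε ∈ (0,1], assume max_{j∈J} p_j > 0 (so C > 0), and let β be a partition of J into M (possibly empty) bags such that every bag has size p(B) ≤ 4C. Then ∑_{ℓ∈L} M̂_ℓ + M̂_sand ≤ M, and there exists a partition of J into ∑_{ℓ∈L} M̂_ℓ + M̂_sand bags consisting of, for each ℓ ∈ L, exactly M̂_ℓ bags each of total job size at most (1+ε)^{ℓ+1}, together with M̂_sand bags each of total job size at most (1+ε)·εC. -/
/-!
A regular bag has size in `[ε²C, 4C]`, so its size class `⌊log_{1+ε} p(B)⌋` lies in `L`; grouping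
the regular bags by class identifies them with `Σ ℓ ∈ L, Fin M̂_ℓ`, and each is kept as a bag of
size `< (1+ε)^{ℓ+1}`. A non-regular bag has size `< εC`, so `M̂_sand` is at most the number of
non-regular bags, which gives `∑ M̂_ℓ + M̂_sand ≤ M`. The jobs of the non-regular bags, each smaller
than `ε²C`, are packed next-fit: listing them in order and cutting the running total at the
multiples of `εC` uses `⌈total/(εC)⌉` bins, each exceeding `εC` by less than one job.
-/

open scoped BigOperators

attribute [local instance] Classical.propDecidable

/-- A bag `b` of `β` is regular if its size is at least `εC` or it packs a job of size
at least `ε²C`. -/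
def Regular {n M : ℕ} (ε C : ℝ) (p : Fin n → ℝ) (β : Fin n → Fin M) (b : Fin M) : Prop :=
  ε * C ≤ bagSize p β b ∨ ∃ j, β j = b ∧ ε ^ 2 * C ≤ p j

/-- `L = {⌊log_{1+ε}(ε²C)⌋, …, ⌈log_{1+ε}(4C)⌉}`. -/
noncomputable def Lset (ε C : ℝ) : Finset ℤ :=
  Finset.Icc ⌊Real.log (ε ^ 2 * C) / Real.log (1 + ε)⌋ ⌈Real.log (4 * C) / Real.log (1 + ε)⌉

/-- `M̂_ℓ`: the number of regular bags of `β` with size in `[(1+ε)^ℓ, (1+ε)^{ℓ+1})`. -/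
noncomputable def Mhat {n M : ℕ} (ε C : ℝ) (p : Fin n → ℝ) (β : Fin n → Fin M) (ℓ : ℤ) : ℕ :=
  (Finset.univ.filter (fun b : Fin M =>
    Regular ε C p β b ∧ (1 + ε) ^ ℓ ≤ bagSize p β b ∧ bagSize p β b < (1 + ε) ^ (ℓ + 1))).card

/-- `M̂_sand = ⌈(total size of non-regular bags)/(εC)⌉`. -/
noncomputable def Msand {n M : ℕ} (ε C : ℝ) (p : Fin n → ℝ) (β : Fin n → Fin M) : ℕ :=
  ⌈(∑ b : Fin M, if ¬ Regular ε C p β b then bagSize p β b else 0) / (ε * C)⌉₊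

/-- Index type for a collection of bags consisting of exactly `M̂_ℓ` bags for each `ℓ ∈ L`
together with `M̂_sand` sand bags. -/
def BagIdx {n M : ℕ} (ε C : ℝ) (p : Fin n → ℝ) (β : Fin n → Fin M) : Type :=
  (Σ ℓ : (Lset ε C), Fin (Mhat ε C p β ℓ.1)) ⊕ Fin (Msand ε C p β)

noncomputable instance {n M : ℕ} (ε C : ℝ) (p : Fin n → ℝ) (β : Fin n → Fin M) :
    Fintype (BagIdx ε C p β) := by
  unfold BagIdx; infer_instance

namespace Real

theorem floor_logb_eq_iff {b x : ℝ} (hb : 1 < b) (hx : 0 < x) (ℓ : ℤ) :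
    ⌊logb b x⌋ = ℓ ↔ b ^ ℓ ≤ x ∧ x < b ^ (ℓ + 1) := by
  rw [Int.floor_eq_iff, le_logb_iff_rpow_le hb hx, logb_lt_iff_lt_rpow hb hx,
    ← Int.cast_one, ← Int.cast_add, rpow_intCast, rpow_intCast]

theorem floor_logb_mem_Icc {b x lo hi : ℝ} (hb : 1 < b) (hlo : 0 < lo) (hx : lo ≤ x)
    (hhi : x ≤ hi) : ⌊logb b x⌋ ∈ Finset.Icc ⌊logb b lo⌋ ⌈logb b hi⌉ :=
  Finset.mem_Icc.2 ⟨Int.floor_mono (logb_le_logb_of_le hb hlo hx),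
    Int.cast_le.1 <| (Int.floor_le _).trans <|
      (logb_le_logb_of_le hb (hlo.trans_le hx) hhi).trans (Int.le_ceil _)⟩

theorem exists_pos_of_iSup_pos {ι : Type*} {f : ι → ℝ} (h : 0 < ⨆ i, f i) :
    ∃ i, 0 < f i := by
  cases isEmpty_or_nonempty ι
  · simp at h
  · exact exists_lt_of_lt_ciSup h

end Real

section NextFit

variable {ι : Type*} [LinearOrder ι] (T : Finset ι) (w : ι → ℝ)

noncomputable def prefixSum (j : ι) : ℝ := ∑ x ∈ T with x < j, w x

variable {T w}

theorem prefixSum_add_le_sum (hw : ∀ x ∈ T, 0 ≤ w x) {j : ι} (hj : j ∈ T) :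
    prefixSum T w j + w j ≤ ∑ x ∈ T, w x := by
  rw [prefixSum, add_comm, ← Finset.sum_insert (by simp)]
  exact Finset.sum_le_sum_of_subset_of_nonneg
    (Finset.insert_subset hj (Finset.filter_subset _ _)) fun x hx _ => hw x hx

theorem sum_filter_Icc_eq_prefixSum {i j : ι} (hij : i ≤ j) (hj : j ∈ T) :
    ∑ x ∈ T with i ≤ x ∧ x ≤ j, w x = prefixSum T w j + w j - prefixSum T w i := by
  have hw : w j = ∑ x ∈ T, if x = j then w x else 0 := by simp [hj]
  rw [hw, prefixSum, prefixSum, Finset.sum_filter, Finset.sum_filter, Finset.sum_filter,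
    ← Finset.sum_add_distrib, ← Finset.sum_sub_distrib]
  refine Finset.sum_congr rfl fun x _ => ?_
  grind

theorem sum_le_of_prefixSum_mem_Ico (hw : ∀ x ∈ T, 0 ≤ w x) {B : Finset ι} (hBT : B ⊆ T)
    {a c δ : ℝ} (hc : 0 ≤ c) (hδ : 0 ≤ δ)
    (hB : ∀ x ∈ B, a ≤ prefixSum T w x ∧ prefixSum T w x < a + c) (hwδ : ∀ x ∈ B, w x ≤ δ) :
    ∑ x ∈ B, w x ≤ c + δ := by
  rcases B.eq_empty_or_nonempty with rfl | hne
  · simp only [Finset.sum_empty]; linarith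
  have hmin := B.min'_mem hne
  have hmax := B.max'_mem hne
  calc ∑ x ∈ B, w x ≤ ∑ x ∈ T with B.min' hne ≤ x ∧ x ≤ B.max' hne, w x :=
        Finset.sum_le_sum_of_subset_of_nonneg
          (fun x hx => Finset.mem_filter.2 ⟨hBT hx, B.min'_le x hx, B.le_max' x hx⟩)
          fun x hx _ => hw x (Finset.mem_filter.1 hx).1
    _ = prefixSum T w (B.max' hne) + w (B.max' hne) - prefixSum T w (B.min' hne) :=
        sum_filter_Icc_eq_prefixSum (B.min'_le _ hmax) (hBT hmax)
    _ ≤ c + δ := by linarith [(hB _ hmax).2, (hB _ hmin).1, hwδ _ hmax]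

theorem exists_nextFit_packing (T : Finset ι) {w : ι → ℝ} {c δ : ℝ} (hc : 0 < c) (hδ : 0 ≤ δ)
    (hw : ∀ x ∈ T, 0 ≤ w x ∧ w x ≤ δ) :
    ∃ f : ι → ℕ, (∀ x ∈ T, w x ≠ 0 → f x < ⌈(∑ x ∈ T, w x) / c⌉₊) ∧
      ∀ i : ℕ, ∑ x ∈ T with f x = i, w x ≤ c + δ := by
  have hw0 x hx := (hw x hx).1
  have hpre x : 0 ≤ prefixSum T w x / c :=
    div_nonneg (Finset.sum_nonneg fun y hy => hw0 y (Finset.mem_filter.1 hy).1) hc.le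
  refine ⟨fun x => ⌊prefixSum T w x / c⌋₊, fun x hx hx0 => ?_, fun i => ?_⟩
  · rw [Nat.floor_lt (hpre x)]
    refine lt_of_lt_of_le ?_ (Nat.le_ceil _)
    gcongr
    linarith [prefixSum_add_le_sum hw0 hx, lt_of_le_of_ne (hw0 x hx) (Ne.symm hx0)]
  · refine sum_le_of_prefixSum_mem_Ico hw0 (Finset.filter_subset _ _) hc.le hδ (a := i * c)
      (fun x hx => ?_) fun x hx => (hw x (Finset.mem_filter.1 hx).1).2
    have := (Nat.floor_eq_iff (hpre x)).1 (Finset.mem_filter.1 hx).2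
    rw [le_div_iff₀ hc, div_lt_iff₀ hc] at this
    constructor <;> linarith

end NextFit

section Scheduling

variable {n M : ℕ} {ε C : ℝ} {p : Fin n → ℝ} {β : Fin n → Fin M}

theorem bagSize_eq_sum_filter {ι : Type*} (γ : Fin n → ι) (x : ι) :
    bagSize p γ x = ∑ j with γ j = x, p j := by
  rw [bagSize, Finset.sum_filter]

theorem le_bagSize (hp : ∀ j, 0 ≤ p j) (j : Fin n) : p j ≤ bagSize p β (β j) := by
  rw [bagSize_eq_sum_filter]
  exact Finset.single_le_sum (fun k _ => hp k) (by simp)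

theorem bagSize_le_sum_of_forall_mem {ι : Type*} (hp : ∀ j, 0 ≤ p j) {γ : Fin n → ι} {x : ι}
    {B : Finset (Fin n)} (h : ∀ j, γ j = x → p j ≠ 0 → j ∈ B) :
    bagSize p γ x ≤ ∑ j ∈ B, p j := by
  rw [bagSize_eq_sum_filter, ← Finset.sum_filter_ne_zero]
  refine Finset.sum_le_sum_of_subset_of_nonneg (fun j hj => ?_) fun j _ _ => hp j
  simp only [Finset.mem_filter, Finset.mem_univ, true_and] at hj
  exact h j hj.1 hj.2

theorem sum_ite_bagSize {ι : Type*} [Fintype ι] (P : ι → Prop) [DecidablePred P]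
    (γ : Fin n → ι) :
    (∑ b, if P b then bagSize p γ b else 0) = ∑ j, if P (γ j) then p j else 0 := by
  calc _ = ∑ b, ∑ j, if γ j = b ∧ P b then p j else 0 := by
        refine Finset.sum_congr rfl fun b _ => ?_
        split_ifs with h <;> simp [bagSize, h]
    _ = ∑ j, ∑ b, if γ j = b ∧ P b then p j else 0 := Finset.sum_comm
    _ = _ := by
        refine Finset.sum_congr rfl fun j _ => ?_
        simp [ite_and]

theorem Regular.sq_mul_le_bagSize (hε0 : 0 ≤ ε) (hε1 : ε ≤ 1) (hC : 0 ≤ C)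
    (hp : ∀ j, 0 ≤ p j) {b : Fin M} (hb : Regular ε C p β b) : ε ^ 2 * C ≤ bagSize p β b := by
  rcases hb with hb | ⟨j, rfl, hj⟩
  · nlinarith [mul_nonneg (mul_nonneg hε0 (sub_nonneg.2 hε1)) hC]
  · exact hj.trans (le_bagSize hp j)

theorem bagSize_lt_of_not_regular {b : Fin M} (hb : ¬ Regular ε C p β b) :
    bagSize p β b < ε * C :=
  lt_of_not_ge fun h => hb (Or.inl h)

theorem lt_sq_mul_of_not_regular {j : Fin n} (hj : ¬ Regular ε C p β (β j)) : p j < ε ^ 2 * C :=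
  lt_of_not_ge fun h => hj (Or.inr ⟨j, rfl, h⟩)

theorem Regular.bagSize_pos (hε0 : 0 < ε) (hε1 : ε ≤ 1) (hC : 0 < C) (hp : ∀ j, 0 ≤ p j)
    {b : Fin M} (hb : Regular ε C p β b) : 0 < bagSize p β b :=
  (by positivity : 0 < ε ^ 2 * C).trans_le (hb.sq_mul_le_bagSize hε0.le hε1 hC.le hp)

theorem Regular.floor_logb_mem_Lset (hε0 : 0 < ε) (hε1 : ε ≤ 1) (hC : 0 < C)
    (hp : ∀ j, 0 ≤ p j) {b : Fin M} (hb : Regular ε C p β b) (hbC : bagSize p β b ≤ 4 * C) :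
    ⌊Real.logb (1 + ε) (bagSize p β b)⌋ ∈ Lset ε C := by
  simpa only [Lset, Real.log_div_log] using Real.floor_logb_mem_Icc (by linarith)
    (by positivity) (hb.sq_mul_le_bagSize hε0.le hε1 hC.le hp) hbC

theorem exists_regular_equiv_sigma (hε0 : 0 < ε) (hε1 : ε ≤ 1) (hC : 0 < C)
    (hp : ∀ j, 0 ≤ p j) (hβ : ∀ b, bagSize p β b ≤ 4 * C) :
    ∃ e : {b // Regular ε C p β b} ≃ Σ ℓ : Lset ε C, Fin (Mhat ε C p β ℓ),
      ∀ s, bagSize p β (e.symm s) < (1 + ε) ^ ((s.1 : ℤ) + 1) := by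
  let cls : {b // Regular ε C p β b} → Lset ε C := fun b =>
    ⟨_, b.2.floor_logb_mem_Lset hε0 hε1 hC hp (hβ b)⟩
  have hcls (b : {b // Regular ε C p β b}) (ℓ : Lset ε C) : cls b = ℓ ↔ b.1 ∈
      Finset.univ.filter (fun b => Regular ε C p β b ∧
        (1 + ε) ^ ℓ.1 ≤ bagSize p β b ∧ bagSize p β b < (1 + ε) ^ (ℓ.1 + 1)) := by
    rw [Subtype.ext_iff, Real.floor_logb_eq_iff (by linarith)
      (b.2.bagSize_pos hε0 hε1 hC hp)]
    simp [b.2]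
  let e := (Equiv.sigmaFiberEquiv cls).symm.trans <| Equiv.sigmaCongrRight fun ℓ =>
    ((Equiv.subtypeEquivRight (hcls · ℓ)).trans
      (Equiv.subtypeSubtypeEquivSubtype fun h => (Finset.mem_filter.1 h).2.1)).trans
      (Finset.equivFin _)
  refine ⟨e, fun s => ?_⟩
  have hs : cls (e.symm s) = s.1 := congrArg Sigma.fst (e.apply_symm_apply s)
  exact (Finset.mem_filter.1 ((hcls _ _).1 hs)).2.2.2

theorem Cval_pos {q : Fin M → ℝ} (hpmax : 0 < ⨆ j, p j) (hq : ∀ i, 0 ≤ q i)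
    (hq1 : ∑ i, q i = 1) : 0 < Cval p q :=
  calc 0 < ⨆ j, p j := hpmax
    _ = ∑ i, q i * ⨆ j, p j := by rw [← Finset.sum_mul, hq1, one_mul]
    _ ≤ Cval p q := Finset.sum_le_sum fun i _ =>
        mul_le_mul_of_nonneg_left (le_max_left _ _) (hq i)

theorem Msand_le_card (hεC : 0 < ε * C) :
    Msand ε C p β ≤ (Finset.univ.filter fun b => ¬ Regular ε C p β b).card := by
  rw [Msand, Nat.ceil_le, div_le_iff₀ hεC]
  calc (∑ b, if ¬ Regular ε C p β b then bagSize p β b else 0)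
      ≤ ∑ b, if ¬ Regular ε C p β b then ε * C else 0 :=
        Finset.sum_le_sum fun b _ => by
          by_cases hb : Regular ε C p β b
          · simp [hb]
          · simpa [hb] using (bagSize_lt_of_not_regular hb).le
    _ = _ := by simp [Finset.sum_ite]

theorem sum_Mhat_add_Msand_le (hεC : 0 < ε * C)
    (e : {b // Regular ε C p β b} ≃ Σ ℓ : Lset ε C, Fin (Mhat ε C p β ℓ)) :
    (∑ ℓ ∈ Lset ε C, Mhat ε C p β ℓ) + Msand ε C p β ≤ M := by
  have hreg : ∑ ℓ ∈ Lset ε C, Mhat ε C p β ℓ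
      = (Finset.univ.filter fun b => Regular ε C p β b).card := by
    rw [← Fintype.card_subtype, Fintype.card_congr e, Fintype.card_sigma,
      ← Finset.sum_coe_sort]
    simp
  have hsplit := Finset.card_filter_add_card_filter_not
    (s := (Finset.univ : Finset (Fin M))) (fun b => Regular ε C p β b)
  rw [Finset.card_univ, Fintype.card_fin] at hsplit
  linarith [Msand_le_card (p := p) (β := β) hεC]

theorem BagIdx.nonempty (hεC : 0 < ε * C) (hp : ∀ j, 0 ≤ p j)
    (e : {b // Regular ε C p β b} ≃ Σ ℓ : Lset ε C, Fin (Mhat ε C p β ℓ))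
    {j : Fin n} (hj : 0 < p j) : Nonempty (BagIdx ε C p β) := by
  by_cases hr : Regular ε C p β (β j)
  · exact ⟨.inl (e ⟨β j, hr⟩)⟩
  refine ⟨.inr ⟨0, Nat.ceil_pos.2 (div_pos ?_ hεC)⟩⟩
  rw [sum_ite_bagSize]
  calc 0 < p j := hj
    _ = if ¬ Regular ε C p β (β j) then p j else 0 := (if_pos hr).symm
    _ ≤ _ := Finset.single_le_sum (f := fun k => if ¬ Regular ε C p β (β k) then p k else 0)
        (fun k _ => by have := hp k; positivity) (Finset.mem_univ j)

theorem exists_packing (hε0 : 0 < ε) (hC : 0 < C) (hp : ∀ j, 0 ≤ p j)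
    (e : {b // Regular ε C p β b} ≃ Σ ℓ : Lset ε C, Fin (Mhat ε C p β ℓ))
    (he : ∀ s, bagSize p β (e.symm s) < (1 + ε) ^ ((s.1 : ℤ) + 1))
    [hne : Nonempty (BagIdx ε C p β)] :
    ∃ γ : Fin n → BagIdx ε C p β,
      (∀ (ℓ : Lset ε C) (i : Fin (Mhat ε C p β ℓ.1)),
        bagSize p γ (Sum.inl ⟨ℓ, i⟩) ≤ (1 + ε) ^ ((ℓ.1 : ℤ) + 1)) ∧
      (∀ i : Fin (Msand ε C p β), bagSize p γ (Sum.inr i) ≤ (1 + ε) * ε * C) := by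
  set T := Finset.univ.filter fun j => ¬ Regular ε C p β (β j)
  obtain ⟨f, hf_lt, hf_le⟩ := exists_nextFit_packing T (c := ε * C) (δ := ε ^ 2 * C)
    (by positivity) (by positivity)
    fun j hj => ⟨hp j, (lt_sq_mul_of_not_regular (Finset.mem_filter.1 hj).2).le⟩
  have hT : ∑ j ∈ T, p j = ∑ b, if ¬ Regular ε C p β b then bagSize p β b else 0 := by
    rw [sum_ite_bagSize, Finset.sum_filter]
  rw [hT] at hf_lt
  let γ j : (Σ ℓ : Lset ε C, Fin (Mhat ε C p β ℓ)) ⊕ Fin (Msand ε C p β) :=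
    -- a job of size zero may go anywhere, and only for `p j ≠ 0` is `f j` below `M̂_sand`
    if hz : p j = 0 then hne.some
    else if hr : Regular ε C p β (β j) then .inl (e ⟨β j, hr⟩)
    else .inr ⟨f j, hf_lt j (Finset.mem_filter.2 ⟨Finset.mem_univ _, hr⟩) hz⟩
  refine ⟨γ, fun ℓ i => ?_, fun i => ?_⟩
  · calc bagSize p γ (.inl ⟨ℓ, i⟩) ≤ bagSize p β (e.symm ⟨ℓ, i⟩) := by
          rw [bagSize_eq_sum_filter β]
          refine bagSize_le_sum_of_forall_mem hp fun j hj hz => ?_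
          by_cases hr : Regular ε C p β (β j)
          · simp only [γ, hz, hr, ↓reduceDIte, Sum.inl.injEq] at hj
            simp [← hj]
          · simp [γ, hz, hr] at hj
      _ ≤ _ := (he _).le
  · calc bagSize p γ (.inr i) ≤ ∑ j ∈ T with f j = i, p j := by
          refine bagSize_le_sum_of_forall_mem hp fun j hj hz => ?_
          by_cases hr : Regular ε C p β (β j)
          · simp [γ, hz, hr] at hj
          · simp only [γ, hz, hr, ↓reduceDIte, Sum.inr.injEq] at hj
            simp [T, hr, ← hj]
      _ ≤ ε * C + ε ^ 2 * C := hf_le i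
      _ = (1 + ε) * ε * C := by ring

end Scheduling

theorem stmt2_general (n M : ℕ) (ε : ℝ) (hε0 : 0 < ε) (hε1 : ε ≤ 1)
    (p : Fin n → ℝ) (hp : ∀ j, 0 ≤ p j) (hpmax : 0 < ⨆ j : Fin n, p j)
    (q : Fin M → ℝ) (hq : ∀ i, 0 ≤ q i) (hq1 : ∑ i, q i = 1)
    (β : Fin n → Fin M) (hβ : ∀ b, bagSize p β b ≤ 4 * Cval p q) :
    ((∑ ℓ ∈ Lset ε (Cval p q), Mhat ε (Cval p q) p β ℓ) + Msand ε (Cval p q) p β ≤ M) ∧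
    ∃ γ : Fin n → BagIdx ε (Cval p q) p β,
      (∀ (ℓ : (Lset ε (Cval p q))) (i : Fin (Mhat ε (Cval p q) p β ℓ.1)),
        bagSize p γ (Sum.inl ⟨ℓ, i⟩) ≤ (1 + ε) ^ ((ℓ.1 : ℤ) + 1)) ∧
      (∀ i : Fin (Msand ε (Cval p q) p β),
        bagSize p γ (Sum.inr i) ≤ (1 + ε) * ε * Cval p q) := by
  have hC := Cval_pos hpmax hq hq1
  have hεC : 0 < ε * Cval p q := mul_pos hε0 hC
  obtain ⟨e, he⟩ := exists_regular_equiv_sigma hε0 hε1 hC hp hβ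
  obtain ⟨j, hj⟩ := Real.exists_pos_of_iSup_pos hpmax
  have := BagIdx.nonempty hεC hp e hj
  exact ⟨sum_Mhat_add_Msand_le hεC e, exists_packing hε0 hC hp e he⟩

/-- the guess `M̂` is feasible: `∑_{ℓ∈L} M̂_ℓ + M̂_sand ≤ M`, and the jobs can be
partitioned into `M̂_ℓ` bags of size at most `(1+ε)^{ℓ+1}` for each `ℓ ∈ L` together with
`M̂_sand` bags of size at most `(1+ε)·εC`. -/
theorem stmt2 (n M : ℕ) (hM : 1 ≤ M) (ε : ℝ) (hε0 : 0 < ε) (hε1 : ε ≤ 1)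
    (p : Fin n → ℝ) (hp : ∀ j, 0 ≤ p j) (hpmax : 0 < ⨆ j : Fin n, p j)
    (q : Fin M → ℝ) (hq : ∀ i, 0 ≤ q i) (hq1 : ∑ i, q i = 1)
    (β : Fin n → Fin M) (hβ : ∀ b, bagSize p β b ≤ 4 * Cval p q) :
    ((∑ ℓ ∈ Lset ε (Cval p q), Mhat ε (Cval p q) p β ℓ) + Msand ε (Cval p q) p β ≤ M) ∧
    ∃ γ : Fin n → BagIdx ε (Cval p q) p β,
      (∀ (ℓ : (Lset ε (Cval p q))) (i : Fin (Mhat ε (Cval p q) p β ℓ.1)),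
        bagSize p γ (Sum.inl ⟨ℓ, i⟩) ≤ (1 + ε) ^ ((ℓ.1 : ℤ) + 1)) ∧
      (∀ i : Fin (Msand ε (Cval p q) p β),
        bagSize p γ (Sum.inr i) ≤ (1 + ε) * ε * Cval p q) :=
  stmt2_general n M ε hε0 hε1 p hp hpmax q hq hq1 β hβ
end

section
/- For every real v with 1 ≤ v < (n/ε)^d, the number of offsets a ∈ {0,1,…,1/ε+3} such that v ∈ ⋃_{k=0}^{K} Ĩ^a_k is at least 1/ε. -/
/-!
Write `v = x ^ t` with `x = n/ε`, so that `0 ≤ t < d`. With `P = 1/ε + 3`, the `k`-th interval of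
offset `a` is `x ^ [kP + a - 1/ε, kP + a)`, so `v` lies in it iff the integer `kP + a` lies in
`(t, t + 1/ε]`. Each of the `1/ε` integers `m` in that range is `kP + a` for `a = (m - 1) % P + 1` and
`k = (m - 1) / P ≤ K`, and these offsets are distinct because `1/ε < P`.
-/

theorem Real.rpow_mem_Ico_rpow_iff {x : ℝ} (hx : 1 < x) {t L U : ℝ} :
    x ^ t ∈ Set.Ico (x ^ L) (x ^ U) ↔ t ∈ Set.Ico L U := by
  simp only [Set.mem_Ico, Real.rpow_le_rpow_left_iff hx, Real.rpow_lt_rpow_left_iff hx]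

theorem le_card_filter_exists_mem_Ico (E P K : ℕ) (hEP : E ≤ P) {t : ℝ} (ht : 0 ≤ t)
    (htK : t + E ≤ (K + 1) * P) :
    E ≤ ((Finset.range (P + 1)).filter (fun a : ℕ =>
        ∃ k ≤ K, t ∈ Set.Ico ((k * P + a : ℝ) - E) (k * P + a))).card := by
  set j := ⌊t⌋₊
  have hjt : (j : ℝ) ≤ t := Nat.floor_le ht
  have htj : t < j + 1 := Nat.lt_floor_add_one t
  have hjE : j + E ≤ (K + 1) * P := by exact_mod_cast (by linarith : (j : ℝ) + E ≤ (K + 1) * P)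
  conv_lhs => rw [← Finset.card_range E]
  refine Finset.card_le_card_of_injOn (fun i => (j + i) % P + 1) (fun i hi => ?_) ?_
  · rw [Finset.mem_coe, Finset.mem_range] at hi
    have hP : 0 < P := by omega
    have hdecomp : (j + i) / P * P + ((j + i) % P + 1) = j + i + 1 := by
      have := Nat.div_add_mod' (j + i) P
      omega
    have hjK : j + i < (K + 1) * P := by omega
    rw [Finset.mem_coe, Finset.mem_filter, Finset.mem_range]
    dsimp only
    refine ⟨by have := Nat.mod_lt (j + i) hP; omega,
      (j + i) / P, Nat.lt_succ_iff.mp ((Nat.div_lt_iff_lt_mul hP).mpr hjK), ?_⟩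
    have hreal : ((j + i) / P : ℕ) * (P : ℝ) + ((j + i) % P + 1 : ℕ) = j + i + 1 := by
      exact_mod_cast hdecomp
    have hiE : (i : ℝ) + 1 ≤ E := by exact_mod_cast hi
    rw [hreal, Set.mem_Ico]
    constructor <;> linarith
  · intro i₁ hi₁ i₂ hi₂ h
    simp only [Finset.coe_range, Set.mem_Iio] at hi₁ hi₂
    have hmod : j + i₁ ≡ j + i₂ [MOD P] := Nat.add_right_cancel h
    exact (hmod.add_left_cancel' j).eq_of_lt_of_lt (by omega) (by omega)

theorem stmt6_general (n : ℕ) (ε : ℝ) (E : ℕ) (hE : (E : ℝ) * ε = 1)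
    (hx : 1 < (n : ℝ) / ε) (d : ℕ)
    (K : ℕ)
    (hK2 : (d : ℝ) ≤ 3 * (K : ℝ) + ((K : ℝ) - 1) / ε)
    (v : ℝ) (hv1 : 1 ≤ v) (hv2 : v < ((n : ℝ) / ε) ^ d) :
    E ≤ ((Finset.range (E + 4)).filter (fun a : ℕ =>
        ∃ k ≤ K, v ∈ Set.Ico (((n : ℝ) / ε) ^ (3 * (k : ℝ) + ((k : ℝ) - 1) / ε + (a : ℝ)))
          (((n : ℝ) / ε) ^ (3 * (k : ℝ) + (k : ℝ) / ε + (a : ℝ))))).card := by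
  set x := (n : ℝ) / ε
  have hv0 : 0 < v := one_pos.trans_le hv1
  obtain ⟨t, ht0, htd, rfl⟩ : ∃ t : ℝ, 0 ≤ t ∧ t < d ∧ x ^ t = v := by
    refine ⟨Real.logb x v, Real.logb_nonneg hx hv1, ?_, Real.rpow_logb (by linarith) hx.ne' hv0⟩
    rwa [Real.logb_lt_iff_lt_rpow hx hv0, Real.rpow_natCast]
  have hdiv (c : ℝ) : c / ε = c * E := by
    rw [div_eq_iff (right_ne_zero_of_mul_eq_one hE), mul_assoc, hE, mul_one]
  rw [hdiv] at hK2
  have hexp (a k : ℕ) : x ^ t ∈ Set.Ico (x ^ (3 * (k : ℝ) + ((k : ℝ) - 1) / ε + a))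
      (x ^ (3 * (k : ℝ) + (k : ℝ) / ε + a)) ↔
      t ∈ Set.Ico ((k * (E + 3 : ℕ) + a : ℝ) - E) (k * (E + 3 : ℕ) + a) := by
    rw [Real.rpow_mem_Ico_rpow_iff hx, hdiv, hdiv]
    push_cast
    ring_nf
  simp_rw [hexp]
  exact le_card_filter_exists_mem_Ico E (E + 3) K (by omega) ht0 (by push_cast; linarith)

/-- for every real `v` with `1 ≤ v < (n/ε)^d`, the number of offsets
`a ∈ {0,…,1/ε+3}` (with `1/ε = E ∈ ℕ`) such that `v` lies in `⋃_{k=0}^K Ĩ^a_k` is at least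
`1/ε = E`, where `Ĩ^a_k = [(n/ε)^{3k+(k−1)/ε+a}, (n/ε)^{3k+k/ε+a})` and `K` is the smallest
positive integer with `3K + (K−1)/ε ≥ d`. -/
theorem stmt6 (n : ℕ) (ε : ℝ) (hε : 0 < ε) (E : ℕ) (hE : (E : ℝ) * ε = 1)
    (hx : 1 < (n : ℝ) / ε) (d : ℕ) (hd : 1 ≤ d)
    (K : ℕ) (hK1 : 1 ≤ K)
    (hK2 : (d : ℝ) ≤ 3 * (K : ℝ) + ((K : ℝ) - 1) / ε)
    (hKmin : ∀ K' : ℕ, 1 ≤ K' → (d : ℝ) ≤ 3 * (K' : ℝ) + ((K' : ℝ) - 1) / ε → K ≤ K')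
    (v : ℝ) (hv1 : 1 ≤ v) (hv2 : v < ((n : ℝ) / ε) ^ d) :
    E ≤ ((Finset.range (E + 4)).filter (fun a : ℕ =>
        ∃ k ≤ K, v ∈ Set.Ico (((n : ℝ) / ε) ^ (3 * (k : ℝ) + ((k : ℝ) - 1) / ε + (a : ℝ)))
          (((n : ℝ) / ε) ^ (3 * (k : ℝ) + (k : ℝ) / ε + (a : ℝ))))).card :=
  stmt6_general n ε E hE hx d K hK2 v hv1 hv2
end

section
/- Suppose that no job j ∈ J has processing time p_j lying in any head gap G̃_{k'} for k' ≥ 1, and let J_{k−1} := { j ∈ J : p_j ∈ Ĩ⁺_{k−1} }. Then for every job j* ∈ J with p_{j*} ∈ ⋃_{k'≥k} Ĩ⁺_{k'} (equivalently, p_{j*} ≥ (n/ε)^{3k+(k−1)/ε+a−3}) it holds that ∑_{j∈J_{k−1}} p_j < ε · p_{j*}. In words: the sum of the processing times of jobs in J_{k−1} is strictly less than ε times the processing time of any job in ⋃_{k'≥k} J_{k'}. -/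
/-!
Let `e` be the exponent of the right end of `Ĩ⁺_{k−1}`, so that the head gap `G̃_k` is
`[(n/ε)^e, (n/ε)^(e+1))`. Since `G̃_k` contains no processing time, `p_{j*} ≥ (n/ε)^e` forces
`p_{j*} ≥ (n/ε)^(e+1)`. Each of the at most `n` jobs of `J_{k−1}` is shorter than `(n/ε)^e`, so their
total is below `n (n/ε)^e = ε (n/ε)^(e+1) ≤ ε p_{j*}`.
-/

open Finset Set

lemma le_of_le_of_notMem_Ico {α : Type*} [LinearOrder α] {a b y : α} (hay : a ≤ y)
    (hy : y ∉ Ico a b) : b ≤ y :=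
  not_lt.mp fun hyb => hy ⟨hay, hyb⟩

lemma sum_ite_mem_Ico_lt_card_mul {ι : Type*} [Fintype ι] [Nonempty ι] (p : ι → ℝ) (l u : ℝ)
    (hu : 0 < u) :
    ∑ j, (if p j ∈ Ico l u then p j else 0) < Fintype.card ι * u := by
  have hterm : ∀ j ∈ (univ : Finset ι), (if p j ∈ Ico l u then p j else 0) < u := by
    intro j _
    split_ifs with hj
    · exact hj.2
    · exact hu
  simpa using sum_lt_sum_of_nonempty univ_nonempty hterm

lemma mul_div_rpow_eq_mul_rpow_add_one {N ε : ℝ} (hN : N ≠ 0) (hε : ε ≠ 0) (e : ℝ) :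
    N * (N / ε) ^ e = ε * (N / ε) ^ (e + 1) := by
  rw [Real.rpow_add_one (div_ne_zero hN hε)]
  field_simp

theorem stmt7_general (n : ℕ) (p : Fin n → ℝ)
    (ε : ℝ) (hε : 0 < ε)
    (a : ℕ) (k : ℕ) (hk : 1 ≤ k)
    (hgap : ∀ j : Fin n, ∀ k' : ℕ, 1 ≤ k' →
      p j ∉ Set.Ico
        (((n : ℝ) / ε) ^ (3 * (k' : ℝ) + ((k' : ℝ) - 1) / ε + (a : ℝ) - 3))
        (((n : ℝ) / ε) ^ (3 * (k' : ℝ) + ((k' : ℝ) - 1) / ε + (a : ℝ) - 2)))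
    (jstar : Fin n)
    (hjstar : ((n : ℝ) / ε) ^ (3 * (k : ℝ) + ((k : ℝ) - 1) / ε + (a : ℝ) - 3) ≤ p jstar) :
    (∑ j : Fin n,
        if p j ∈ Set.Ico
            (((n : ℝ) / ε) ^ (3 * ((k : ℝ) - 1) + (((k : ℝ) - 1) - 1) / ε + (a : ℝ) - 3))
            (((n : ℝ) / ε) ^ (3 * ((k : ℝ) - 1) + ((k : ℝ) - 1) / ε + (a : ℝ)))
        then p j else 0) < ε * p jstar := by
  have : Nonempty (Fin n) := ⟨jstar⟩
  have hn : (0 : ℝ) < n := Nat.cast_pos.mpr (Fin.pos jstar)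
  set e := 3 * ((k : ℝ) - 1) + ((k : ℝ) - 1) / ε + (a : ℝ)
  have hjstar_gap : (n / ε : ℝ) ^ (e + 1) ≤ p jstar := by
    have hgap_k := hgap jstar k hk
    have hlow : 3 * (k : ℝ) + ((k : ℝ) - 1) / ε + (a : ℝ) - 3 = e := by ring
    have hup : 3 * (k : ℝ) + ((k : ℝ) - 1) / ε + (a : ℝ) - 2 = e + 1 := by ring
    rw [hlow, hup] at hgap_k
    rw [hlow] at hjstar
    exact le_of_le_of_notMem_Ico hjstar hgap_k
  calc _ < (n : ℝ) * (n / ε : ℝ) ^ e := by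
        simpa using sum_ite_mem_Ico_lt_card_mul p _ _
          (Real.rpow_pos_of_pos (div_pos hn hε) e)
    _ = ε * (n / ε : ℝ) ^ (e + 1) := mul_div_rpow_eq_mul_rpow_add_one hn.ne' hε.ne' e
    _ ≤ ε * p jstar := mul_le_mul_of_nonneg_left hjstar_gap hε.le

/-- if no job's processing time lies in any head gap
`G̃_{k'} = [(n/ε)^{3k'+(k'−1)/ε+a−3}, (n/ε)^{3k'+(k'−1)/ε+a−2})` for `k' ≥ 1`, then the total
processing time of the jobs in `J_{k−1}` (those with `p_j` in the extended interval
`Ĩ⁺_{k−1} = [(n/ε)^{3(k−1)+(k−2)/ε+a−3}, (n/ε)^{3(k−1)+(k−1)/ε+a})`) is strictly less than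
`ε` times the processing time of any job `j*` with
`p_{j*} ≥ (n/ε)^{3k+(k−1)/ε+a−3}` (i.e., any job of `⋃_{k'≥k} J_{k'}`). -/
theorem stmt7 (n : ℕ) (hn : 1 ≤ n) (p : Fin n → ℝ) (hp : ∀ j, 0 ≤ p j)
    (ε : ℝ) (hε : 0 < ε) (E : ℕ) (hE : (E : ℝ) * ε = 1)
    (a : ℕ) (k : ℕ) (hk : 1 ≤ k)
    (hx : 1 < (n : ℝ) / ε)
    (hgap : ∀ j : Fin n, ∀ k' : ℕ, 1 ≤ k' →
      p j ∉ Set.Ico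
        (((n : ℝ) / ε) ^ (3 * (k' : ℝ) + ((k' : ℝ) - 1) / ε + (a : ℝ) - 3))
        (((n : ℝ) / ε) ^ (3 * (k' : ℝ) + ((k' : ℝ) - 1) / ε + (a : ℝ) - 2)))
    (jstar : Fin n)
    (hjstar : ((n : ℝ) / ε) ^ (3 * (k : ℝ) + ((k : ℝ) - 1) / ε + (a : ℝ) - 3) ≤ p jstar) :
    (∑ j : Fin n,
        if p j ∈ Set.Ico
            (((n : ℝ) / ε) ^ (3 * ((k : ℝ) - 1) + (((k : ℝ) - 1) - 1) / ε + (a : ℝ) - 3))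
            (((n : ℝ) / ε) ^ (3 * ((k : ℝ) - 1) + ((k : ℝ) - 1) / ε + (a : ℝ)))
        then p j else 0) < ε * p jstar :=
  stmt7_general n p ε hε a k hk hgap jstar hjstar
end

section
/- Let β be a partition of a finite job set into bags with sizes p(B) ≥ 0, let m ≥ 1 be an integer, and let v := Opt_min(β, m). Let S be a set of bags of β with |S| < m such that p(B) ≥ v for every B ∈ S. Then there exists a schedule of β on m machines whose minimum machine load equals v and in which every bag of S is assigned to a machine that receives no other bag (in particular, no two bags of S share a machine). -/
open scoped BigOperators

attribute [local instance] Classical.propDecidable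

/-- `Opt_min`: the maximum over all assignments of items (with sizes `sz`) to `m` identical
machines of the minimum machine load. -/
noncomputable def optMin {ι : Type*} [Fintype ι] (sz : ι → ℝ) (m : ℕ) : ℝ :=
  ⨆ σ : ι → Fin m, ⨅ i : Fin m, load sz σ i

/-!
Take an optimal schedule `σ₀`. The bags of `S` occupy at most `|S|` machines under `σ₀`, so
at least `m - |S|` machines carry no bag of `S`, and each of them has load at least `v`. Put the
bags of `S` alone on `|S|` fresh machines `A`; these have load at least `v` by assumption. Fold
the machines of `σ₀` onto the remaining `m - |S|` machines so that each of those receives the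
whole content of some old machine free of `S`. Every load is then at least `v`, and `v` is the
optimum, so the new schedule is optimal as well.
-/

section Schedule

variable {ι : Type*} [Fintype ι] {sz : ι → ℝ} {m : ℕ}

theorem le_load (hsz : ∀ b, 0 ≤ sz b) {σ : ι → Fin m} {b : ι} {i : Fin m} (h : σ b = i) :
    sz b ≤ load sz σ i := by
  unfold load
  calc sz b = if σ b = i then sz b else 0 := (if_pos h).symm
    _ ≤ _ := Finset.single_le_sum (f := fun c => if σ c = i then sz c else 0)
        (fun c _ => by split_ifs <;> simp [hsz c]) (Finset.mem_univ b)

theorem load_le_load (hsz : ∀ b, 0 ≤ sz b) {σ τ : ι → Fin m} {i j : Fin m}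
    (h : ∀ b, σ b = i → τ b = j) : load sz σ i ≤ load sz τ j := by
  unfold load
  refine Finset.sum_le_sum fun b _ => ?_
  by_cases hb : σ b = i
  · simp [hb, h b hb]
  · split_ifs <;> simp [hsz b]

variable (sz m)

theorem minLoad_le_optMin (σ : ι → Fin m) : ⨅ i, load sz σ i ≤ optMin sz m :=
  le_ciSup (f := fun τ : ι → Fin m => ⨅ i, load sz τ i) (Set.finite_range _).bddAbove σ

theorem exists_minLoad_eq_optMin [NeZero m] :
    ∃ σ : ι → Fin m, ⨅ i, load sz σ i = optMin sz m := by
  obtain ⟨σ, hσ⟩ := Finite.exists_max fun τ : ι → Fin m => ⨅ i, load sz τ i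
  exact ⟨σ, le_antisymm (minLoad_le_optMin sz m σ) (ciSup_le hσ)⟩

variable {sz m}

theorem minLoad_eq_optMin_of_forall_le [NeZero m] {σ : ι → Fin m}
    (h : ∀ i, optMin sz m ≤ load sz σ i) : ⨅ i, load sz σ i = optMin sz m :=
  le_antisymm (minLoad_le_optMin sz m σ) (le_ciInf h)

end Schedule

theorem Finset.exists_map_compl_of_card_le {α : Type*} [Fintype α] [DecidableEq α]
    {A T : Finset α} (hTA : T.card ≤ A.card) (hA : A.card < Fintype.card α) :
    ∃ g : α → α, (∀ i, g i ∉ A) ∧ ∀ j ∉ A, ∃ i ∉ T, g i = j := by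
  have hcard : Fintype.card {j // j ∈ Aᶜ} ≤ Fintype.card {i // i ∈ Tᶜ} := by
    simp only [Fintype.card_coe, Finset.card_compl]
    omega
  obtain ⟨w⟩ := Function.Embedding.nonempty_of_card_le hcard
  have : Nonempty {j // j ∈ Aᶜ} := by
    rw [← Fintype.card_pos_iff, Fintype.card_coe, Finset.card_compl]
    omega
  let w' : {j // j ∈ Aᶜ} → α := fun j => w j
  have hw' : w'.Injective := Subtype.val_injective.comp w.injective
  refine ⟨fun i => ((Function.invFun w' i : {j // j ∈ Aᶜ}) : α), fun i => Finset.mem_compl.mp (Function.invFun w' i).2,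
    fun j hj => ⟨w' ⟨j, Finset.mem_compl.mpr hj⟩, Finset.mem_compl.mp (w _).2, ?_⟩⟩
  simp only [Function.leftInverse_invFun hw' _]

theorem exists_schedule_isolating {ι : Type*} [Fintype ι] {m : ℕ} {sz : ι → ℝ}
    (hsz : ∀ b, 0 ≤ sz b) {S : Finset ι} (hS : S.card < m) {v : ℝ} (hSv : ∀ B ∈ S, v ≤ sz B)
    {σ₀ : ι → Fin m} (hσ₀ : ∀ i, v ≤ load sz σ₀ i) :
    ∃ σ : ι → Fin m, (∀ j, v ≤ load sz σ j) ∧ ∀ B ∈ S, ∀ B', B' ≠ B → σ B' ≠ σ B := by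
  obtain ⟨e⟩ : Nonempty ({B // B ∈ S} ↪ Fin m) :=
    Function.Embedding.nonempty_of_card_le (by simpa using hS.le)
  set A := Finset.univ.map e
  obtain ⟨g, hgA, hg⟩ := Finset.exists_map_compl_of_card_le (A := A) (T := S.image σ₀)
    (by simpa [A] using Finset.card_image_le) (by simpa [A] using hS)
  let σ : ι → Fin m := fun B => if h : B ∈ S then e ⟨B, h⟩ else g (σ₀ B)
  have hσS : ∀ B (h : B ∈ S), σ B = e ⟨B, h⟩ := fun B h => dif_pos h
  have hσ : ∀ B, B ∉ S → σ B = g (σ₀ B) := fun B h => dif_neg h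
  refine ⟨σ, fun j => ?_, fun B hB B' hne heq => ?_⟩
  · by_cases hj : j ∈ A
    · obtain ⟨⟨B, hB⟩, -, rfl⟩ := Finset.mem_map.mp hj
      exact (hSv B hB).trans (le_load hsz (hσS B hB))
    · obtain ⟨i, hiT, rfl⟩ := hg j hj
      refine (hσ₀ i).trans (load_le_load hsz fun B hB => ?_)
      have hBS : B ∉ S := fun h => hiT (hB ▸ Finset.mem_image_of_mem σ₀ h)
      rw [hσ B hBS, hB]
  · rw [hσS B hB] at heq
    by_cases hB' : B' ∈ S
    · rw [hσS B' hB'] at heq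
      exact hne (congrArg Subtype.val (e.injective heq))
    · rw [hσ B' hB'] at heq
      exact hgA _ (heq ▸ Finset.mem_map_of_mem e (Finset.mem_univ _))

theorem stmt13_general (Mb : ℕ) (sz : Fin Mb → ℝ) (hsz : ∀ B, 0 ≤ sz B)
    (m : ℕ) (S : Finset (Fin Mb)) (hScard : S.card < m)
    (hS : ∀ B ∈ S, optMin sz m ≤ sz B) :
    ∃ σ : Fin Mb → Fin m,
      (⨅ i : Fin m, load sz σ i) = optMin sz m ∧
      ∀ B ∈ S, ∀ B' : Fin Mb, B' ≠ B → σ B' ≠ σ B := by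
  have : NeZero m := ⟨by omega⟩
  obtain ⟨σ₀, hσ₀⟩ := exists_minLoad_eq_optMin sz m
  have hσ₀_le : ∀ i, optMin sz m ≤ load sz σ₀ i :=
    fun i => hσ₀ ▸ ciInf_le (Set.finite_range _).bddBelow i
  obtain ⟨σ, hσ, hisol⟩ := exists_schedule_isolating hsz hScard hS hσ₀_le
  exact ⟨σ, minLoad_eq_optMin_of_forall_le hσ, hisol⟩

/-- if each bag in `S` has size at least `v = Opt_min(β, m)` and `|S| < m`,
then there is a schedule on `m` machines whose minimum machine load is exactly `v` and in
which every bag of `S` sits alone on its machine (no other bag shares its machine). -/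
theorem stmt13 (Mb : ℕ) (sz : Fin Mb → ℝ) (hsz : ∀ B, 0 ≤ sz B)
    (m : ℕ) (hm : 0 < m) (S : Finset (Fin Mb)) (hScard : S.card < m)
    (hS : ∀ B ∈ S, optMin sz m ≤ sz B) :
    ∃ σ : Fin Mb → Fin m,
      (⨅ i : Fin m, load sz σ i) = optMin sz m ∧
      ∀ B ∈ S, ∀ B' : Fin Mb, B' ≠ B → σ B' ≠ σ B :=
  stmt13_general Mb sz hsz m S hScard hS
end
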